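/- Let G be a p-valued group with valuation ω, i.e., ω satisfies the filtration axioms and additionally ω(x) < ∞ for x ≠ e, ω(x) > 1/(p-1) for all x, and ω(x^p) = ω(x) + 1 for all x. Then the associated graded abelian group gr(G) = ⊕_ν G_ν/G_ν⁺ with the ε-action induced by x ↦ x^p is a torsion-free (equivalently, free) graded module over 𝔽_p[ε]. -/

import Mathlib

/-!
Put `a = x y⁻¹`. If `ω a ≤ ν` then `ω a = ν`, so `ω (a ^ p) = ν + 1`; we show that
`ω ((a y) ^ p (y ^ p)⁻¹ (a ^ p)⁻¹) ≥ min (2ν + 1) (pν)`, which exceeds `ν + 1` because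
`ν > 1/(p-1)`. Together with `ω (x ^ p (y ^ p)⁻¹) > ν + 1` this forces `ω (a ^ p) > ν + 1`.

For the estimate, pass to the quotient of `G` by `{ω ≥ min (2μ + 1) (pμ)}`, filtered by the images
`F k` of `{ω ≥ kμ}`: there `⁅F i, F j⁆ ≤ F (i + j)`, `F 2` has exponent `p` and `F p = 1`, and it
suffices to prove `(αβ) ^ p = α ^ p β ^ p` for `α, β ∈ F 1`. Since
`(αβ) ^ p = α ^ p ∏_{n<p} α⁻ⁿ β αⁿ`, this is a discrete Taylor expansion: if the `j`-th differences
of a sequence `c` lie in `F (j + 1)`, then `∏_{n<p} c n ≈ ∑_j C(p, j+1) Δʲ c 0`, and every term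
with `j > 0` is killed either by `p ∣ C(p, j+1)` (it lies in `F 2`) or by `F p = 1`. The
non-commutative corrections are controlled by the closure of such sequences under products,
conjugates and commutators.
-/

open scoped ENNReal commutatorElement

namespace GroupSeq

variable {H : Type*} [Group H]

def partialProd (c : ℕ → H) : ℕ → H
  | 0 => 1
  | n + 1 => c n * partialProd c n

def diff (c : ℕ → H) (n : ℕ) : H := c (n + 1) * (c n)⁻¹

@[simp] lemma partialProd_zero (c : ℕ → H) : partialProd c 0 = 1 := rfl

lemma partialProd_succ (c : ℕ → H) (n : ℕ) :
    partialProd c (n + 1) = c n * partialProd c n := rfl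

@[simp] lemma partialProd_one : partialProd (1 : ℕ → H) = 1 := by
  funext n; induction n with
  | zero => rfl
  | succ n ih => simp [partialProd_succ, ih]

@[simp] lemma iterate_partialProd_one (s : ℕ) : partialProd^[s] (1 : ℕ → H) = 1 := by
  induction s with
  | zero => rfl
  | succ s ih => rw [Function.iterate_succ_apply, partialProd_one, ih]

@[simp] lemma diff_partialProd (c : ℕ → H) : diff (partialProd c) = c := by
  funext n; simp [diff, partialProd_succ]

lemma partialProd_diff_mul_apply_zero (c : ℕ → H) (n : ℕ) :
    partialProd (diff c) n * c 0 = c n := by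
  induction n with
  | zero => simp
  | succ n ih => rw [partialProd_succ, mul_assoc, ih, diff, inv_mul_cancel_right]

lemma diff_mul (c d : ℕ → H) : diff (c * d) = diff c * (c * diff d * c⁻¹) := by
  funext n; simp only [diff, Pi.mul_apply, Pi.inv_apply]; group

lemma diff_conj (c t : ℕ → H) :
    diff (t * c * t⁻¹) =
      diff t * (t * diff c * t⁻¹) * (diff t)⁻¹ * ⁅diff t, t * c * t⁻¹⁆ := by
  funext n; simp only [diff, Pi.mul_apply, Pi.inv_apply, commutatorElement_def]; group

lemma diff_commutator (c d : ℕ → H) :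
    diff ⁅c, d⁆ = diff c * ⁅c, diff d⁆ * (diff c)⁻¹ * ⁅diff c * diff d, ⁅c, d⁆⁆ *
      (⁅c, d⁆ * ⁅diff c, diff d * d⁆ * ⁅c, d⁆⁻¹) := by
  funext n; simp only [diff, Pi.mul_apply, Pi.inv_apply, commutatorElement_def]; group

@[simp] lemma diff_const (g : H) : diff (fun _ => g) = 1 := by
  funext n; simp [diff]

@[simp] lemma diff_one : diff (1 : ℕ → H) = 1 := diff_const 1

lemma partialProd_eq_one {c : ℕ → H} {n : ℕ} (hc : ∀ i < n, c i = 1) :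
    partialProd c n = 1 := by
  induction n with
  | zero => rfl
  | succ n ih => rw [partialProd_succ, hc n (by omega), ih fun i hi => hc i (by omega), one_mul]

def invPowChoose (g : H) (k n : ℕ) : H := (g ^ n.choose k)⁻¹

@[simp] lemma invPowChoose_zero (g : H) : invPowChoose g 0 = fun _ => g⁻¹ := by
  funext n; simp [invPowChoose]

lemma diff_invPowChoose_succ (g : H) (k : ℕ) :
    diff (invPowChoose g (k + 1)) = invPowChoose g k := by
  funext n
  simp only [diff, invPowChoose, Nat.choose_succ_succ', pow_add, inv_inv]
  group

lemma diff_conj_pow (α β : H) :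
    diff (fun n => (α ^ n)⁻¹ * β * α ^ n) =
      fun n => (α ^ n)⁻¹ * ⁅α⁻¹, β⁆ * α ^ n := by
  funext n
  simp only [diff, pow_succ, commutatorElement_def]
  group

lemma eq_iterate_partialProd_iterate_diff {c : ℕ → H} {r : ℕ} (hc : ∀ n < r, c n = 1) :
    c = partialProd^[r] (diff^[r] c) := by
  induction r generalizing c with
  | zero => rfl
  | succ r ih =>
    have hdiff : diff c = partialProd^[r] (diff^[r] (diff c)) :=
      ih fun n hn => by simp [diff, hc n (by omega), hc (n + 1) (by omega)]
    rw [Function.iterate_succ_apply', Function.iterate_succ_apply, ← hdiff]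
    funext n
    simpa [hc 0 (by omega)] using (partialProd_diff_mul_apply_zero c n).symm

lemma partialProd_pow_choose_mul (g : H) (k : ℕ) (c : ℕ → H) (n : ℕ) :
    partialProd (fun i => g ^ i.choose k * c i) n =
      g ^ n.choose (k + 1) *
        partialProd (invPowChoose g (k + 1) * c * (invPowChoose g (k + 1))⁻¹) n := by
  induction n with
  | zero => simp
  | succ n ih =>
    rw [partialProd_succ, ih, partialProd_succ, Nat.choose_succ_succ', pow_add]
    simp only [Pi.mul_apply, Pi.inv_apply, invPowChoose]
    group

lemma mul_pow_eq_pow_mul_partialProd (α β : H) (n : ℕ) :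
    (α * β) ^ n = α ^ n * partialProd (fun i => (α ^ i)⁻¹ * β * α ^ i) n := by
  induction n with
  | zero => simp
  | succ n ih =>
    rw [pow_succ', ih, partialProd_succ, pow_succ']
    group

end GroupSeq

open GroupSeq

structure PFiltration (H : Type*) [Group H] (p : ℕ) where
  F : ℕ → Subgroup H
  antitone : Antitone F
  normal : ∀ i, (F i).Normal
  commutator_le : ∀ i j, ⁅F i, F j⁆ ≤ F (i + j)
  pow_eq_one : ∀ g ∈ F 2, g ^ p = 1
  eq_bot : F p = ⊥

namespace PFiltration

variable {H : Type*} [Group H] {p : ℕ} (Φ : PFiltration H p)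

lemma commutator_mem {i j : ℕ} {g h : H} (hg : g ∈ Φ.F i) (hh : h ∈ Φ.F j) :
    ⁅g, h⁆ ∈ Φ.F (i + j) :=
  Φ.commutator_le i j (Subgroup.commutator_mem_commutator hg hh)

lemma conj_mem {i : ℕ} {g : H} (t : H) (hg : g ∈ Φ.F i) : t * g * t⁻¹ ∈ Φ.F i :=
  (Φ.normal i).conj_mem g hg t

lemma eq_one_of_le {i : ℕ} {g : H} (hi : p ≤ i) (hg : g ∈ Φ.F i) : g = 1 := by
  simpa [Φ.eq_bot] using Φ.antitone hi hg

def HasWeightUpTo (J a : ℕ) (c : ℕ → H) : Prop :=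
  ∀ j ≤ J, ∀ n, (diff^[j] c) n ∈ Φ.F (j + a)

def HasWeight (a : ℕ) (c : ℕ → H) : Prop :=
  ∀ j n, (diff^[j] c) n ∈ Φ.F (j + a)

variable {Φ}

lemma HasWeightUpTo.mono {J J' a a' : ℕ} {c : ℕ → H} (h : Φ.HasWeightUpTo J a c)
    (hJ : J' ≤ J) (ha : a' ≤ a) : Φ.HasWeightUpTo J' a' c :=
  fun j hj n => Φ.antitone (by omega) (h j (hj.trans hJ) n)

lemma hasWeightUpTo_zero_iff {a : ℕ} {c : ℕ → H} :
    Φ.HasWeightUpTo 0 a c ↔ ∀ n, c n ∈ Φ.F a := by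
  simp [HasWeightUpTo]

lemma hasWeightUpTo_succ_iff {J a : ℕ} {c : ℕ → H} :
    Φ.HasWeightUpTo (J + 1) a c ↔
      Φ.HasWeightUpTo 0 a c ∧ Φ.HasWeightUpTo J (a + 1) (diff c) := by
  constructor
  · intro h
    refine ⟨h.mono (Nat.zero_le _) le_rfl, fun j hj n => ?_⟩
    rw [← add_assoc, add_right_comm, ← Function.iterate_succ_apply]
    exact h (j + 1) (by omega) n
  · rintro ⟨h0, h⟩ (_ | j) hj n
    · exact h0 0 le_rfl n
    · rw [Function.iterate_succ_apply, add_right_comm, add_assoc]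
      exact h j (by omega) n

lemma HasWeightUpTo.diff {J a : ℕ} {c : ℕ → H} (h : Φ.HasWeightUpTo (J + 1) a c) :
    Φ.HasWeightUpTo J (a + 1) (diff c) :=
  (hasWeightUpTo_succ_iff.1 h).2

-- The three closure properties are proved together, order of differences by order: the difference
-- of a product involves a conjugate, that of a conjugate a commutator, and that of a commutator
-- all three.
structure WeightClosedUpTo (Φ : PFiltration H p) (J : ℕ) : Prop where
  mul {a b : ℕ} {c d : ℕ → H} :
    Φ.HasWeightUpTo J a c → Φ.HasWeightUpTo J b d → Φ.HasWeightUpTo J (min a b) (c * d)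
  conj {a : ℕ} {c t : ℕ → H} :
    Φ.HasWeightUpTo J a c → Φ.HasWeightUpTo J 0 t → Φ.HasWeightUpTo J a (t * c * t⁻¹)
  commutator {a b : ℕ} {c d : ℕ → H} :
    Φ.HasWeightUpTo J a c → Φ.HasWeightUpTo J b d → Φ.HasWeightUpTo J (a + b) ⁅c, d⁆

lemma weightClosedUpTo_zero : Φ.WeightClosedUpTo 0 where
  mul hc hd := hasWeightUpTo_zero_iff.2 fun n =>
    mul_mem (Φ.antitone (min_le_left _ _) (hasWeightUpTo_zero_iff.1 hc n))
      (Φ.antitone (min_le_right _ _) (hasWeightUpTo_zero_iff.1 hd n))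
  conj hc _ := hasWeightUpTo_zero_iff.2 fun n => Φ.conj_mem _ (hasWeightUpTo_zero_iff.1 hc n)
  commutator hc hd := hasWeightUpTo_zero_iff.2 fun n =>
    Φ.commutator_mem (hasWeightUpTo_zero_iff.1 hc n) (hasWeightUpTo_zero_iff.1 hd n)

lemma WeightClosedUpTo.succ {J : ℕ} (ih : Φ.WeightClosedUpTo J) :
    Φ.WeightClosedUpTo (J + 1) where
  mul {a b c d} hc hd := hasWeightUpTo_succ_iff.2
    ⟨weightClosedUpTo_zero.mul (hc.mono (Nat.zero_le _) le_rfl)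
      (hd.mono (Nat.zero_le _) le_rfl), by
      rw [diff_mul]
      exact (ih.mul hc.diff (ih.conj hd.diff (hc.mono (by omega) (Nat.zero_le _)))).mono le_rfl
        (by omega)⟩
  conj {a c t} hc ht := hasWeightUpTo_succ_iff.2
    ⟨weightClosedUpTo_zero.conj (hc.mono (Nat.zero_le _) le_rfl)
      (ht.mono (Nat.zero_le _) le_rfl), by
      have hc' := hc.mono (Nat.le_succ J) le_rfl
      have ht' := ht.mono (Nat.le_succ J) le_rfl
      rw [diff_conj]
      exact (ih.mul (ih.conj (ih.conj hc.diff ht') (ht.diff.mono le_rfl (Nat.zero_le _)))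
        (ih.commutator ht.diff (ih.conj hc' ht'))).mono le_rfl (by omega)⟩
  commutator {a b c d} hc hd := hasWeightUpTo_succ_iff.2
    ⟨weightClosedUpTo_zero.commutator (hc.mono (Nat.zero_le _) le_rfl)
      (hd.mono (Nat.zero_le _) le_rfl), by
      have hc' := hc.mono (Nat.le_succ J) le_rfl
      have hd' := hd.mono (Nat.le_succ J) le_rfl
      have hcd := ih.commutator hc' hd'
      have hcd₀ := hcd.mono le_rfl (Nat.zero_le _)
      rw [diff_commutator]
      exact (ih.mul (ih.mul
        (ih.conj (ih.commutator hc' hd.diff) (hc.diff.mono le_rfl (Nat.zero_le _)))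
        (ih.commutator (ih.mul hc.diff hd.diff) hcd))
        (ih.conj (ih.commutator hc.diff (ih.mul hd.diff hd')) hcd₀)).mono le_rfl (by omega)⟩

lemma weightClosedUpTo (J : ℕ) : Φ.WeightClosedUpTo J := by
  induction J with
  | zero => exact weightClosedUpTo_zero
  | succ J ih => exact ih.succ

lemma hasWeight_iff {a : ℕ} {c : ℕ → H} :
    Φ.HasWeight a c ↔ ∀ J, Φ.HasWeightUpTo J a c :=
  ⟨fun h _ j _ n => h j n, fun h j n => h j j le_rfl n⟩

lemma HasWeight.apply {a : ℕ} {c : ℕ → H} (h : Φ.HasWeight a c) (n : ℕ) :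
    c n ∈ Φ.F a := by
  simpa using h 0 n

lemma HasWeight.mono {a a' : ℕ} {c : ℕ → H} (h : Φ.HasWeight a c) (ha : a' ≤ a) :
    Φ.HasWeight a' c :=
  fun j n => Φ.antitone (by omega) (h j n)

lemma HasWeight.iterate_diff {a : ℕ} {c : ℕ → H} (h : Φ.HasWeight a c) (r : ℕ) :
    Φ.HasWeight (a + r) (diff^[r] c) := by
  intro j n
  rw [← Function.iterate_add_apply, ← add_assoc, add_right_comm]
  exact h (j + r) n

lemma HasWeight.diff {a : ℕ} {c : ℕ → H} (h : Φ.HasWeight a c) :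
    Φ.HasWeight (a + 1) (diff c) :=
  h.iterate_diff 1

lemma HasWeight.of_diff {a : ℕ} {c : ℕ → H} (h₀ : ∀ n, c n ∈ Φ.F a)
    (h : Φ.HasWeight (a + 1) (GroupSeq.diff c)) : Φ.HasWeight a c :=
  hasWeight_iff.2 fun
    | 0 => hasWeightUpTo_zero_iff.2 h₀
    | J + 1 => hasWeightUpTo_succ_iff.2 ⟨hasWeightUpTo_zero_iff.2 h₀, hasWeight_iff.1 h J⟩

lemma HasWeight.conj {a : ℕ} {c t : ℕ → H} (hc : Φ.HasWeight a c) (ht : Φ.HasWeight 0 t) :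
    Φ.HasWeight a (t * c * t⁻¹) :=
  hasWeight_iff.2 fun J => (weightClosedUpTo J).conj (hasWeight_iff.1 hc J) (hasWeight_iff.1 ht J)

lemma HasWeight.partialProd {a : ℕ} {c : ℕ → H} (h : Φ.HasWeight (a + 1) c) :
    Φ.HasWeight a (partialProd c) := by
  refine .of_diff (fun n => ?_) (by rwa [GroupSeq.diff_partialProd])
  induction n with
  | zero => exact one_mem _
  | succ n ih => exact mul_mem (Φ.antitone (Nat.le_succ a) (h.apply n)) ih

lemma hasWeight_one (a : ℕ) : Φ.HasWeight a 1 := fun j n => by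
  rw [Function.iterate_fixed diff_one]
  exact one_mem _

lemma hasWeight_const {a : ℕ} {g : H} (hg : g ∈ Φ.F a) : Φ.HasWeight a (fun _ => g) :=
  .of_diff (fun _ => hg) (by rw [diff_const]; exact hasWeight_one _)

lemma hasWeight_invPowChoose {g : H} {k a : ℕ} (hg : g ∈ Φ.F (k + a)) :
    Φ.HasWeight a (invPowChoose g k) := by
  induction k generalizing a with
  | zero => simpa using hasWeight_const (inv_mem (by simpa using hg))
  | succ k ih =>
    refine .of_diff (fun n => inv_mem (pow_mem (Φ.antitone (by omega) hg) _)) ?_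
    rw [diff_invPowChoose_succ]
    exact ih (by rwa [← add_assoc, add_right_comm])

lemma hasWeight_conj_pow {α β : H} {a : ℕ} (hα : α ∈ Φ.F 1) (hβ : β ∈ Φ.F a) :
    Φ.HasWeight a (fun n => (α ^ n)⁻¹ * β * α ^ n) := by
  intro j
  induction j generalizing a β with
  | zero => exact fun n => by simpa using Φ.conj_mem (α ^ n)⁻¹ hβ
  | succ j ih =>
    rw [Function.iterate_succ_apply, diff_conj_pow, add_right_comm, add_assoc]
    exact ih (add_comm 1 a ▸ Φ.commutator_mem (inv_mem hα) hβ)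

lemma HasWeight.inv_apply_zero_mul {a : ℕ} {c : ℕ → H} (h : Φ.HasWeight a c) :
    Φ.HasWeight a (fun n => (c 0)⁻¹ * c n) := by
  have hc : (fun n => (c 0)⁻¹ * c n) =
      (fun _ => (c 0)⁻¹) * GroupSeq.partialProd (GroupSeq.diff c) *
        (fun _ => (c 0)⁻¹)⁻¹ := by
    funext n
    simp [← partialProd_diff_mul_apply_zero c n, mul_assoc]
  rw [hc]
  exact h.diff.partialProd.conj
    (hasWeight_const (inv_mem (Φ.antitone (Nat.zero_le a) (h.apply 0))))

lemma exists_iterate_partialProd_eq {b t : ℕ} {c : ℕ → H} (hc : Φ.HasWeight (b + t) c)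
    (hb : 1 ≤ b) : ∃ z : ℕ → H, (∀ n < t + 1, z n = 1) ∧ Φ.HasWeight b z ∧
      partialProd^[t + 1] c = fun n => c 0 ^ n.choose (t + 1) * partialProd z n := by
  have hc₀ : c 0 ∈ Φ.F (b + t) := hc.apply 0
  induction t generalizing b with
  | zero =>
    set w := fun n => (c 0)⁻¹ * c n
    refine ⟨invPowChoose (c 0) 1 * w * (invPowChoose (c 0) 1)⁻¹, fun n hn => ?_,
      hc.inv_apply_zero_mul.conj (hasWeight_invPowChoose (Φ.antitone hb hc₀)), ?_⟩
    · obtain rfl : n = 0 := by omega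
      simp [w]
    · have hw : c = fun n => c 0 ^ n.choose 0 * w n := by funext n; simp [w]
      conv_lhs => rw [Function.iterate_one, hw]
      exact funext (partialProd_pow_choose_mul (c 0) 0 w)
  | succ t ih =>
    obtain ⟨z, hz₀, hz, heq⟩ :=
      ih (b := b + 1) (hc.mono (by omega)) (by omega) (Φ.antitone (by omega) hc₀)
    refine ⟨invPowChoose (c 0) (t + 2) * partialProd z * (invPowChoose (c 0) (t + 2))⁻¹,
      fun n hn => ?_,
      hz.partialProd.conj (hasWeight_invPowChoose (Φ.antitone (by omega) hc₀)), ?_⟩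
    · simp [partialProd_eq_one fun i (hi : i < n) => hz₀ i (by omega)]
    · rw [Function.iterate_succ_apply', heq]
      exact funext (partialProd_pow_choose_mul (c 0) (t + 1) (partialProd z))

lemma iterate_partialProd_eq_one_of_le {r a : ℕ} {c : ℕ → H} (hc₀ : ∀ n < r, c n = 1)
    (hc : Φ.HasWeight a c) (h : p ≤ a + r) (s : ℕ) : partialProd^[s] c = 1 := by
  have hdiff : diff^[r] c = 1 :=
    funext fun n => Φ.eq_one_of_le h ((hc.iterate_diff r).apply n)
  rw [eq_iterate_partialProd_iterate_diff hc₀, ← Function.iterate_add_apply, hdiff,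
    iterate_partialProd_one]

lemma pow_choose_eq_one (hp : p.Prime) {g : H} (hg : g ∈ Φ.F 2) {s : ℕ} (hs₀ : 0 < s)
    (hs : s < p) : g ^ p.choose s = 1 := by
  obtain ⟨m, hm⟩ := hp.dvd_choose_self hs₀.ne' hs
  rw [hm, pow_mul, Φ.pow_eq_one g hg, one_pow]

theorem iterate_partialProd_apply_prime_eq_one (hp : p.Prime) (k : ℕ) {r a s : ℕ}
    {c : ℕ → H} (hk : p ≤ a + r + k) (hc₀ : ∀ n < r, c n = 1) (hc : Φ.HasWeight a c)
    (h2 : 2 ≤ a + r) (hs₀ : 0 < s) (hs : s ≤ a) : partialProd^[s] c p = 1 := by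
  -- `k` bounds `p - (a + r)`, and the recursive call raises `a + r` by one.
  induction k generalizing r a s c with
  | zero => rw [iterate_partialProd_eq_one_of_le hc₀ hc (by omega)]; rfl
  | succ k ih =>
    rcases le_or_gt p (a + r) with hpa | hpa
    · rw [iterate_partialProd_eq_one_of_le hc₀ hc hpa]; rfl
    obtain ⟨z, hz₀, hz, heq⟩ := Φ.exists_iterate_partialProd_eq (b := a + 1 - s)
      (t := s + r - 1) ((hc.iterate_diff r).mono (by omega)) (by omega)
    rw [eq_iterate_partialProd_iterate_diff hc₀, ← Function.iterate_add_apply,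
      show s + r = s + r - 1 + 1 by omega, heq]
    dsimp only
    rw [Φ.pow_choose_eq_one hp
        (Φ.antitone h2 ((hc.iterate_diff r).apply 0)) (by omega) (by omega), one_mul]
    simpa using ih (s := 1) (by omega) hz₀ hz (by omega) one_pos (by omega)

theorem partialProd_apply_prime (hp : p.Prime) {c : ℕ → H} (hc : Φ.HasWeight 1 c) :
    GroupSeq.partialProd c p = c 0 ^ p := by
  obtain ⟨z, hz₀, hz, heq⟩ := Φ.exists_iterate_partialProd_eq (t := 0) hc le_rfl
  have hz_p := Φ.iterate_partialProd_apply_prime_eq_one hp p le_add_self hz₀ hz le_rfl one_pos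
    le_rfl
  rw [Function.iterate_one] at hz_p
  simpa [hz_p] using congrFun heq p

theorem mul_pow_prime (hp : p.Prime) {α β : H} (hα : α ∈ Φ.F 1) (hβ : β ∈ Φ.F 1) :
    (α * β) ^ p = α ^ p * β ^ p := by
  rw [mul_pow_eq_pow_mul_partialProd, Φ.partialProd_apply_prime hp (hasWeight_conj_pow hα hβ)]
  simp

def ofMap {G : Type*} [Group G] (f : G →* H) (hf : Function.Surjective f)
    (L : ℕ → Subgroup G) (hL : Antitone L) (hL_normal : ∀ i, (L i).Normal)
    (hL_commutator : ∀ i j, ⁅L i, L j⁆ ≤ L (i + j)) (hL_pow : ∀ g ∈ L 2, g ^ p ∈ f.ker)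
    (hL_bot : L p ≤ f.ker) : PFiltration H p where
  F i := (L i).map f
  antitone _ _ h := Subgroup.map_mono (hL h)
  normal i := (hL_normal i).map f hf
  commutator_le i j := by
    rw [← Subgroup.map_commutator]
    exact Subgroup.map_mono (hL_commutator i j)
  pow_eq_one := by
    rintro _ ⟨g, hg, rfl⟩
    rw [← map_pow]
    exact hL_pow g hg
  eq_bot := by
    rw [eq_bot_iff, Subgroup.map_le_iff_le_comap]
    exact hL_bot

end PFiltration

lemma add_one_lt_min_two_mul_add_one_natCast_mul {p : ℕ} (hp : 2 ≤ p) {ν : ℝ≥0∞}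
    (hν₀ : 0 < ν) (hν : ν ≠ ⊤) (h : 1 / ((p : ℝ≥0∞) - 1) < ν) :
    ν + 1 < min (2 * ν + 1) (p * ν) := by
  obtain ⟨q, rfl⟩ : ∃ q, p = q + 1 := ⟨p - 1, by omega⟩
  have hq : (q : ℝ≥0∞) ≠ 0 := by exact_mod_cast (show q ≠ 0 by omega)
  push_cast at h ⊢
  rw [ENNReal.add_sub_cancel_right ENNReal.one_ne_top,
    ENNReal.div_lt_iff (Or.inl hq) (Or.inl (ENNReal.natCast_ne_top q))] at h
  refine lt_min (ENNReal.add_lt_add_right ENNReal.one_ne_top ?_) ?_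
  · rw [two_mul]; exact ENNReal.lt_add_right hν hν₀.ne'
  · rw [add_mul, one_mul, add_comm _ ν]
    exact ENNReal.add_lt_add_left hν (mul_comm ν q ▸ h)

structure IsGroupFiltration {G : Type*} [Group G] (ω : G → ℝ≥0∞) : Prop where
  map_one : ω 1 = ⊤
  min_le_map_mul_inv : ∀ x y, min (ω x) (ω y) ≤ ω (x * y⁻¹)
  add_le_map_inv_mul_inv_mul_mul : ∀ x y, ω x + ω y ≤ ω (x⁻¹ * y⁻¹ * x * y)

namespace IsGroupFiltration

variable {G : Type*} [Group G] {ω : G → ℝ≥0∞} (hω : IsGroupFiltration ω)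
include hω

lemma map_inv (x : G) : ω x⁻¹ = ω x := by
  have h : ∀ z : G, ω z ≤ ω z⁻¹ := fun z => by
    simpa [hω.map_one] using hω.min_le_map_mul_inv 1 z
  exact le_antisymm (by simpa using h x⁻¹) (h x)

lemma min_le_map_mul (x y : G) : min (ω x) (ω y) ≤ ω (x * y) := by
  simpa [hω.map_inv] using hω.min_le_map_mul_inv x y⁻¹

lemma min_le_map_inv_mul (x y : G) : min (ω x) (ω y) ≤ ω (x⁻¹ * y) := by
  simpa [hω.map_inv] using hω.min_le_map_mul x⁻¹ y

lemma add_le_map_commutatorElement (x y : G) : ω x + ω y ≤ ω ⁅x, y⁆ := by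
  simpa [hω.map_inv, commutatorElement_def, mul_assoc] using
    hω.add_le_map_inv_mul_inv_mul_mul x⁻¹ y⁻¹

def subgroup (w : ℝ≥0∞) : Subgroup G where
  carrier := {g | w ≤ ω g}
  one_mem' := by simp [hω.map_one]
  mul_mem' hx hy := (le_min hx hy).trans (hω.min_le_map_mul _ _)
  inv_mem' hx := by simpa [Set.mem_ofPred_eq, hω.map_inv] using hx

lemma mem_subgroup {w : ℝ≥0∞} {g : G} : g ∈ hω.subgroup w ↔ w ≤ ω g := Iff.rfl

lemma subgroup_antitone : Antitone hω.subgroup := fun _ _ h _ hg => h.trans hg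

lemma commutator_subgroup_le (v w : ℝ≥0∞) :
    ⁅hω.subgroup v, hω.subgroup w⁆ ≤ hω.subgroup (v + w) :=
  Subgroup.commutator_le.2 fun _ hx _ hy =>
    (add_le_add hx hy).trans (hω.add_le_map_commutatorElement _ _)

lemma subgroup_normal (w : ℝ≥0∞) : (hω.subgroup w).Normal where
  conj_mem x hx g := by
    have hgx : ω x ≤ ω ⁅g, x⁆ := le_add_self.trans (hω.add_le_map_commutatorElement g x)
    have h := hω.min_le_map_mul ⁅g, x⁆ x
    rw [min_eq_right hgx, commutatorElement_def, inv_mul_cancel_right] at h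
    exact hx.trans h

theorem min_le_map_mul_pow_mul_inv_mul_inv {p : ℕ} (hp : p.Prime)
    (hpow : ∀ x : G, ω x + 1 ≤ ω (x ^ p)) {μ : ℝ≥0∞} {x y : G} (hx : μ ≤ ω x)
    (hy : μ ≤ ω y) :
    min (2 * μ + 1) (p * μ) ≤ ω ((x * y) ^ p * (y ^ p)⁻¹ * (x ^ p)⁻¹) := by
  let N := hω.subgroup (min (2 * μ + 1) (p * μ))
  have := hω.subgroup_normal (min (2 * μ + 1) (p * μ))
  let Φ : PFiltration (G ⧸ N) p :=
    .ofMap (QuotientGroup.mk' N) (QuotientGroup.mk'_surjective N) (fun k => hω.subgroup (k * μ))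
    (fun _ _ h => hω.subgroup_antitone (by gcongr))
    (fun _ => hω.subgroup_normal _)
    (fun i j => by simpa [add_mul] using hω.commutator_subgroup_le (i * μ) (j * μ))
    (fun g hg => by
      rw [QuotientGroup.ker_mk']
      have hg : ((2 : ℕ) : ℝ≥0∞) * μ ≤ ω g := hg
      push_cast at hg
      exact min_le_of_left_le ((by gcongr : 2 * μ + 1 ≤ ω g + 1).trans (hpow g)))
    (fun g hg => by
      rw [QuotientGroup.ker_mk']
      exact min_le_of_right_le (hω.mem_subgroup.1 hg))
  have hmem {z : G} (hz : μ ≤ ω z) : (z : G ⧸ N) ∈ Φ.F 1 :=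
    Subgroup.mem_map_of_mem _ (by simpa [mem_subgroup] using hz)
  have h := Φ.mul_pow_prime hp (hmem hx) (hmem hy)
  rw [← hω.mem_subgroup, ← QuotientGroup.eq_one_iff]
  simp only [QuotientGroup.mk_mul, QuotientGroup.mk_inv, QuotientGroup.mk_pow]
  rw [h, mul_inv_cancel_right, mul_inv_cancel]

end IsGroupFiltration

theorem graded_of_p_valued_torsion_free_general (p : ℕ) [Fact p.Prime]
    {G : Type*} [Group G] (ω : G → ℝ≥0∞) (hone : ω 1 = ⊤)
    (h1 : ∀ x y : G, min (ω x) (ω y) ≤ ω (x * y⁻¹))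
    (h2 : ∀ x y : G, ω x + ω y ≤ ω (x⁻¹ * y⁻¹ * x * y))
    (h4 : ∀ x : G, (1 : ℝ≥0∞) / ((p : ℝ≥0∞) - 1) < ω x)
    (h5 : ∀ x : G, ω (x ^ p) = ω x + 1) :
    ∀ ν : ℝ≥0∞, 0 < ν → ∀ x y : G, ν ≤ ω x → ν ≤ ω y →
      ν + 1 < ω (x ^ p * (y ^ p)⁻¹) → ν < ω (x * y⁻¹) := by
  intro ν hν₀ x y hx hy hxy
  have hp : p.Prime := Fact.out
  have hω : IsGroupFiltration ω := ⟨hone, h1, h2⟩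
  have hν : ν ≠ ⊤ := (ENNReal.add_ne_top.1 (ne_top_of_lt hxy)).1
  by_contra! hle
  set a := x * y⁻¹
  have ha : ω a = ν := le_antisymm hle ((le_min hx hy).trans (h1 x y))
  have hkey := hω.min_le_map_mul_pow_mul_inv_mul_inv hp (fun z => (h5 z).ge) ha.ge hy
  rw [inv_mul_cancel_right] at hkey
  have hgap := add_one_lt_min_two_mul_add_one_natCast_mul hp.two_le hν₀ hν (ha ▸ h4 a)
  set b := x ^ p * (y ^ p)⁻¹
  have hap := hω.min_le_map_inv_mul (b * (a ^ p)⁻¹) b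
  rw [show (b * (a ^ p)⁻¹)⁻¹ * b = a ^ p by group, h5, ha] at hap
  exact (lt_min (hgap.trans_le hkey) hxy).not_ge hap

/-- For a `p`-valued group `(G, ω)` the `ε`-action (induced by `x ↦ x^p`) on the
associated graded `gr(G) = ⊕ G_ν/G_ν⁺` is injective, i.e. `gr(G)` is a torsion-free
(equivalently free) graded `𝔽_p[ε]`-module: if `x, y ∈ G_ν` and
`x^p ≡ y^p mod G_{ν+1}⁺`, then `x ≡ y mod G_ν⁺`. -/
theorem graded_of_p_valued_torsion_free (p : ℕ) [Fact p.Prime]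
    {G : Type*} [Group G] (ω : G → ℝ≥0∞) (hone : ω 1 = ⊤)
    (h1 : ∀ x y : G, min (ω x) (ω y) ≤ ω (x * y⁻¹))
    (h2 : ∀ x y : G, ω x + ω y ≤ ω (x⁻¹ * y⁻¹ * x * y))
    (h3 : ∀ x : G, x ≠ 1 → ω x ≠ ⊤)
    (h4 : ∀ x : G, (1 : ℝ≥0∞) / ((p : ℝ≥0∞) - 1) < ω x)
    (h5 : ∀ x : G, ω (x ^ p) = ω x + 1) :
    ∀ ν : ℝ≥0∞, 0 < ν → ∀ x y : G, ν ≤ ω x → ν ≤ ω y →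
      ν + 1 < ω (x ^ p * (y ^ p)⁻¹) → ν < ω (x * y⁻¹) :=
  graded_of_p_valued_torsion_free_general p ω hone h1 h2 h4 h5
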